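/- arXiv:1403.3280 — 4 statements merged into one kernel-verified Lean document; each statement's English description precedes it below -/
import Mathlib

section
/- Let {(M_t, Z_t); t ≥ 1} be i.i.d. random elements in R^{d×d} × R^d. If (∏_{j=1}^{t-1} M_j) Z_t → 0 almost surely as t → ∞, then for every x > 0, ∑_{t=1}^∞ P( min_{1 ≤ k ≤ t-1} |(∏_{j=k}^{t-1} M_j) Z_t| > x ) < ∞. -/
open MeasureTheory ProbabilityTheory Filter

noncomputable section

instance {m n α : Type*} [MeasurableSpace α] : MeasurableSpace (Matrix m n α) :=
  inferInstanceAs (MeasurableSpace (m → n → α))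

/-- The sequence `W` is i.i.d. under `μ`. -/
def IsIIDSeq {Ω β : Type*} [MeasurableSpace Ω] [MeasurableSpace β]
    (μ : Measure Ω) (W : ℕ → Ω → β) : Prop :=
  iIndepFun W μ ∧ ∀ t, IdentDistrib (W t) (W 0) μ μ

/-- The ordered product `M 0 * M 1 * ⋯ * M (n-1)` (the paper's `M₁ M₂ ⋯ Mₙ`, in
0-based indexing; the empty product is the identity matrix). -/
def prodTo {Ω : Type*} {d : ℕ} (M : ℕ → Ω → Matrix (Fin d) (Fin d) ℝ) (n : ℕ) (ω : Ω) :
    Matrix (Fin d) (Fin d) ℝ :=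
  ((List.range n).map (fun j => M j ω)).prod

/-- The ordered product `M a * M (a+1) * ⋯ * M (b-1)` (empty product for `a ≥ b`). -/
def prodSeg {Ω : Type*} {d : ℕ} (M : ℕ → Ω → Matrix (Fin d) (Fin d) ℝ) (a b : ℕ) (ω : Ω) :
    Matrix (Fin d) (Fin d) ℝ :=
  ((List.range (b - a)).map (fun j => M (a + j) ω)).prod

/-- Application of a matrix to a vector of Euclidean space (so that the norms involved
are the Euclidean norm and the induced spectral operator norm). -/
def app {d : ℕ} (A : Matrix (Fin d) (Fin d) ℝ) (v : EuclideanSpace ℝ (Fin d)) :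
    EuclideanSpace ℝ (Fin d) :=
  Matrix.toEuclideanCLM (𝕜 := ℝ) A v

/-- The spectral norm of a matrix: the operator norm induced by the Euclidean norm. -/
def sNorm {d : ℕ} (A : Matrix (Fin d) (Fin d) ℝ) : ℝ :=
  ‖Matrix.toEuclideanCLM (𝕜 := ℝ) A‖

/-- Outer product `u vᵀ` of two vectors. -/
def outer {d : ℕ} (u v : EuclideanSpace ℝ (Fin d)) : Matrix (Fin d) (Fin d) ℝ :=
  Matrix.of fun i j => u i * v j

/-!
Write `A n` for the `n`-th event of the series. For `s + 1 < t`, the event `A t` is contained in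
the event that all windows ending at `t` and starting after `s` exceed `x`; this event depends
only on `(M_j, Z_j)_{j > s}`, so it is independent of the past up to time `s`, and by
stationarity it has the probability of `A (t - s - 1)`. Since `A n` forces
`|M_0 ⋯ M_{n-1} Z_n| > x`, the almost sure convergence provides `R` with
`θ := P(⋃_{m ≥ R} A m) < 1`. Select greedily the occurrences of the events `A n` lying more
than `R` apart: by the above, the probability of making `i` selections is at most `θ ^ i`, and
every occurrence lies within `R` after a selected time (or `0`), so
`∑ P(A n) ≤ (R + 1) / (1 - θ)`.
-/

open scoped ENNReal Topology
open Set Function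

instance {m n α : Type*} [Countable m] [Countable n] [TopologicalSpace α]
    [SecondCountableTopology α] : SecondCountableTopology (Matrix m n α) :=
  inferInstanceAs (SecondCountableTopology (m → n → α))

instance {m n α : Type*} [Countable m] [Countable n] [TopologicalSpace α] [MeasurableSpace α]
    [SecondCountableTopology α] [BorelSpace α] : BorelSpace (Matrix m n α) :=
  inferInstanceAs (BorelSpace (m → n → α))

section Greedy

variable {Ω : Type*} {mΩ : MeasurableSpace Ω} {μ : Measure Ω} {A : ℕ → Set Ω} {R : ℕ}

/-- `greedyHit A R i t` is the event that `t` is the `i`-th time selected greedily among the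
times `u` with `ω ∈ A u`, each selected time lying more than `R` after the previous one and
the `0`-th selected time being `0`. -/
def greedyHit (A : ℕ → Set Ω) (R : ℕ) : ℕ → ℕ → Set Ω
  | 0, t => {_ω | t = 0}
  | i + 1, t => ⋃ s, ⋃ (_ : s + R < t), greedyHit A R i s ∩ A t ∩ ⋂ u ∈ Ioo (s + R) t, (A u)ᶜ

theorem measurableSet_greedyHit (ℱ : Filtration ℕ mΩ) (hA : ∀ t, MeasurableSet[ℱ t] (A t)) :
    ∀ i t, MeasurableSet[ℱ t] (greedyHit A R i t)
  | 0, t => MeasurableSet.const _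
  | i + 1, t =>
    .iUnion fun s => .iUnion fun hs =>
      ((ℱ.mono (by omega) _ (measurableSet_greedyHit ℱ hA i s)).inter (hA t)).inter
        (.biInter (to_countable _) fun u hu => (ℱ.mono hu.2.le _ (hA u)).compl)

theorem eq_of_mem_greedyHit {ω : Ω} :
    ∀ {i t t' : ℕ}, ω ∈ greedyHit A R i t → ω ∈ greedyHit A R i t' → t = t'
  | 0, _, _, h, h' => h.trans h'.symm
  | i + 1, t, t', h, h' => by
    simp only [greedyHit, mem_iUnion, mem_inter_iff, mem_iInter, mem_compl_iff] at h h'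
    obtain ⟨s, hs, ⟨hi, ht⟩, hgap⟩ := h
    obtain ⟨s', hs', ⟨hi', ht'⟩, hgap'⟩ := h'
    obtain rfl := eq_of_mem_greedyHit hi hi'
    by_contra hne
    rcases Nat.lt_or_gt_of_ne hne with hlt | hlt
    · exact hgap' t ⟨hs, hlt⟩ ht
    · exact hgap t' ⟨hs', hlt⟩ ht'

theorem pairwise_disjoint_greedyHit (i : ℕ) : Pairwise (Disjoint on (greedyHit A R i)) :=
  fun _ _ hne => disjoint_left.2 fun _ h h' => hne (eq_of_mem_greedyHit h h')

theorem exists_mem_greedyHit {ω : Ω} {n : ℕ} (hn : ω ∈ A n) :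
    ∃ i t, ω ∈ greedyHit A R i t ∧ n ∈ Icc t (t + R) := by
  classical
  set P : ℕ → Prop := fun t => ∃ i, ω ∈ greedyHit A R i t
  set t₀ := Nat.findGreatest P n
  obtain ⟨i, hi⟩ : P t₀ := Nat.findGreatest_spec (P := P) (Nat.zero_le n) ⟨0, rfl⟩
  refine ⟨i, t₀, hi, Nat.findGreatest_le n, not_lt.1 fun hlate => ?_⟩
  -- otherwise the first occurrence after `t₀ + R`, which is at most `n`, is selected after `t₀`
  have hex : ∃ u, t₀ + R < u ∧ ω ∈ A u := ⟨n, hlate, hn⟩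
  obtain ⟨hlate₁, hA₁⟩ := Nat.find_spec hex
  have hnext : ω ∈ greedyHit A R (i + 1) (Nat.find hex) :=
    mem_iUnion₂.2 ⟨t₀, hlate₁, ⟨hi, hA₁⟩,
      mem_iInter₂.2 fun u hu hAu => Nat.find_min hex hu.2 ⟨hu.1, hAu⟩⟩
  have : Nat.find hex ≤ t₀ :=
    Nat.le_findGreatest (P := P) (Nat.find_min' hex ⟨hlate, hn⟩) ⟨i + 1, hnext⟩
  omega

theorem iUnion_greedyHit_succ_subset (i : ℕ) :
    ⋃ t, greedyHit A R (i + 1) t ⊆ ⋃ s, greedyHit A R i s ∩ ⋃ t > s + R, A t := by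
  simp only [greedyHit, iUnion_subset_iff]
  intro t s hs ω hω
  exact mem_iUnion.2 ⟨s, hω.1.1, mem_biUnion hs hω.1.2⟩

theorem tsum_measure_greedyHit_succ_le (ℱ : Filtration ℕ mΩ)
    (hA : ∀ t, MeasurableSet[ℱ t] (A t)) {θ : ℝ≥0∞}
    (hθ : ∀ s E, MeasurableSet[ℱ s] E → μ (E ∩ ⋃ t > s + R, A t) ≤ θ * μ E) (i : ℕ) :
    ∑' t, μ (greedyHit A R (i + 1) t) ≤ θ * ∑' s, μ (greedyHit A R i s) := calc
  ∑' t, μ (greedyHit A R (i + 1) t) = μ (⋃ t, greedyHit A R (i + 1) t) :=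
    (measure_iUnion (pairwise_disjoint_greedyHit _)
      fun t => ℱ.le t _ (measurableSet_greedyHit ℱ hA _ t)).symm
  _ ≤ μ (⋃ s, greedyHit A R i s ∩ ⋃ t > s + R, A t) :=
    measure_mono (iUnion_greedyHit_succ_subset i)
  _ ≤ ∑' s, μ (greedyHit A R i s ∩ ⋃ t > s + R, A t) := measure_iUnion_le _
  _ ≤ ∑' s, θ * μ (greedyHit A R i s) :=
    ENNReal.tsum_le_tsum fun s => hθ s _ (measurableSet_greedyHit ℱ hA i s)
  _ = θ * ∑' s, μ (greedyHit A R i s) := ENNReal.tsum_mul_left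

theorem tsum_measure_greedyHit_le (ℱ : Filtration ℕ mΩ)
    (hA : ∀ t, MeasurableSet[ℱ t] (A t)) {θ : ℝ≥0∞}
    (hθ : ∀ s E, MeasurableSet[ℱ s] E → μ (E ∩ ⋃ t > s + R, A t) ≤ θ * μ E) :
    ∀ i, ∑' t, μ (greedyHit A R i t) ≤ θ ^ i * μ univ
  | 0 => by
    rw [tsum_eq_single 0 fun t ht => by simp [greedyHit, ht]]
    simp [greedyHit]
  | i + 1 => calc
    ∑' t, μ (greedyHit A R (i + 1) t) ≤ θ * ∑' s, μ (greedyHit A R i s) :=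
      tsum_measure_greedyHit_succ_le ℱ hA hθ i
    _ ≤ θ * (θ ^ i * μ univ) := by gcongr; exact tsum_measure_greedyHit_le ℱ hA hθ i
    _ = θ ^ (i + 1) * μ univ := by rw [pow_succ', mul_assoc]

theorem tsum_indicator_Icc_const (c : ℝ≥0∞) (t R : ℕ) :
    ∑' n, (Icc t (t + R)).indicator (fun _ => c) n = (R + 1) * c := by
  rw [← tsum_subtype, ENNReal.tsum_set_const, ← Finset.coe_Icc, encard_coe_eq_coe_finsetCard,
    Nat.card_Icc, show t + R + 1 - t = R + 1 by omega]
  norm_cast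

theorem measure_le_tsum_indicator_greedyHit (n : ℕ) :
    μ (A n) ≤ ∑' i, ∑' t, (Icc t (t + R)).indicator (fun _ => μ (greedyHit A R i t)) n := calc
  μ (A n) ≤ μ (⋃ i, ⋃ t, ⋃ (_ : n ∈ Icc t (t + R)), greedyHit A R i t) :=
      measure_mono fun ω hω => by
        obtain ⟨i, t, hit, hwin⟩ := exists_mem_greedyHit (R := R) hω
        exact mem_iUnion.2 ⟨i, mem_iUnion.2 ⟨t, mem_iUnion.2 ⟨hwin, hit⟩⟩⟩
  _ ≤ ∑' i, ∑' t, μ (⋃ (_ : n ∈ Icc t (t + R)), greedyHit A R i t) :=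
    (measure_iUnion_le _).trans (ENNReal.tsum_le_tsum fun i => measure_iUnion_le _)
  _ = ∑' i, ∑' t, (Icc t (t + R)).indicator (fun _ => μ (greedyHit A R i t)) n := by
    congr! with i t
    by_cases h : n ∈ Icc t (t + R) <;> simp [h]

theorem tsum_measure_le_mul_tsum_greedyHit :
    ∑' n, μ (A n) ≤ (R + 1) * ∑' i, ∑' t, μ (greedyHit A R i t) := calc
  ∑' n, μ (A n)
    ≤ ∑' n, ∑' i, ∑' t, (Icc t (t + R)).indicator (fun _ => μ (greedyHit A R i t)) n :=
    ENNReal.tsum_le_tsum measure_le_tsum_indicator_greedyHit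
  _ = ∑' i, ∑' t, ∑' n, (Icc t (t + R)).indicator (fun _ => μ (greedyHit A R i t)) n := by
    rw [ENNReal.tsum_comm]
    exact tsum_congr fun i => ENNReal.tsum_comm
  _ = (R + 1) * ∑' i, ∑' t, μ (greedyHit A R i t) := by
    simp only [tsum_indicator_Icc_const, ENNReal.tsum_mul_left]

theorem tsum_measure_le_of_measure_inter_le (ℱ : Filtration ℕ mΩ)
    (hA : ∀ t, MeasurableSet[ℱ t] (A t)) {θ : ℝ≥0∞}
    (hθ : ∀ s E, MeasurableSet[ℱ s] E → μ (E ∩ ⋃ t > s + R, A t) ≤ θ * μ E) :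
    ∑' n, μ (A n) ≤ (R + 1) * (1 - θ)⁻¹ * μ univ := calc
  ∑' n, μ (A n) ≤ (R + 1) * ∑' i, ∑' t, μ (greedyHit A R i t) :=
    tsum_measure_le_mul_tsum_greedyHit
  _ ≤ (R + 1) * ∑' i, θ ^ i * μ univ := by
    gcongr with i
    exact tsum_measure_greedyHit_le ℱ hA hθ i
  _ = (R + 1) * (1 - θ)⁻¹ * μ univ := by
    rw [ENNReal.tsum_mul_right, ENNReal.tsum_geometric, mul_assoc]

end Greedy

section Segments

variable {Ω : Type*} {d : ℕ}

theorem continuous_app :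
    Continuous fun p : Matrix (Fin d) (Fin d) ℝ × EuclideanSpace ℝ (Fin d) => app p.1 p.2 := by
  have h : (fun p : Matrix (Fin d) (Fin d) ℝ × EuclideanSpace ℝ (Fin d) => app p.1 p.2) =
      fun p => WithLp.toLp 2 (p.1.mulVec p.2.ofLp) :=
    funext fun p => Matrix.toEuclideanCLM_toLp p.1 p.2.ofLp
  rw [h]
  exact (PiLp.continuous_toLp 2 _).comp
    (continuous_fst.matrix_mulVec ((PiLp.continuous_ofLp 2 _).comp continuous_snd))


theorem measurable_prodSeg {mΩ : MeasurableSpace Ω} {M : ℕ → Ω → Matrix (Fin d) (Fin d) ℝ}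
    {a b : ℕ} (hM : ∀ j ∈ Ico a b, Measurable (M j)) : Measurable (prodSeg M a b) := by
  have := List.measurable_fun_prod ((List.range (b - a)).map fun j => M (a + j)) <| by
    simp only [List.mem_map, List.mem_range, forall_exists_index, and_imp]
    rintro _ j hj rfl
    exact hM _ ⟨by omega, by omega⟩
  convert this using 1
  funext ω
  simp only [prodSeg, List.map_map, Function.comp_def]

theorem prodSeg_add_right (M : ℕ → Ω → Matrix (Fin d) (Fin d) ℝ) (σ a b : ℕ) (ω : Ω) :
    prodSeg (fun j => M (j + σ)) a b ω = prodSeg M (a + σ) (b + σ) ω := by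
  simp only [prodSeg, Nat.add_sub_add_right]
  congr 2 with j
  rw [Nat.add_right_comm]

def exceedSet (M : ℕ → Ω → Matrix (Fin d) (Fin d) ℝ) (Z : ℕ → Ω → EuclideanSpace ℝ (Fin d))
    (x : ℝ) (n : ℕ) : Set Ω :=
  {ω | ∀ k < n, x < ‖app (prodSeg M k n ω) (Z n ω)‖}

variable {M : ℕ → Ω → Matrix (Fin d) (Fin d) ℝ} {Z : ℕ → Ω → EuclideanSpace ℝ (Fin d)} {x : ℝ}

theorem measurableSet_exceedSet {mΩ : MeasurableSpace Ω} {n : ℕ}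
    (hM : ∀ j < n, Measurable (M j)) (hZ : Measurable (Z n)) :
    MeasurableSet (exceedSet M Z x n) := by
  simp only [exceedSet, ofPred_forall]
  exact .iInter fun k => .iInter fun _ => measurableSet_lt measurable_const
    (continuous_app.measurable.comp ((measurable_prodSeg fun j hj => hM j hj.2).prodMk hZ)).norm

theorem exceedSet_subset_shift (σ m : ℕ) :
    exceedSet M Z x (m + σ) ⊆ exceedSet (fun j => M (j + σ)) (fun j => Z (j + σ)) x m :=
  fun ω hω k hk => by
    rw [prodSeg_add_right]
    exact hω (k + σ) (by omega)

theorem preimage_exceedSet_fst_snd (σ m : ℕ) :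
    (fun ω n => (M (n + σ) ω, Z (n + σ) ω)) ⁻¹'
        exceedSet (fun j w => (w j).1) (fun j w => (w j).2) x m =
      exceedSet (fun j => M (j + σ)) (fun j => Z (j + σ)) x m :=
  rfl

theorem exceedSet_subset_prodTo {n : ℕ} (hn : 0 < n) :
    exceedSet M Z x n ⊆ {ω | x < ‖app (prodTo M n ω) (Z n ω)‖} := fun ω hω => by
  simpa [prodSeg, prodTo] using hω 0 hn

end Segments

section Independence

variable {Ω β : Type*} {mΩ : MeasurableSpace Ω} [mβ : MeasurableSpace β] {μ : Measure Ω}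
  {V : ℕ → Ω → β}

theorem IsIIDSeq.map_shift (hV : ∀ t, Measurable (V t)) (h : IsIIDSeq μ V) (σ : ℕ) :
    μ.map (fun ω n => V (n + σ) ω) = Measure.infinitePi fun _ => μ.map (V 0) := by
  have := (h.1.precomp (add_left_injective σ)).map_fun_eq_infinitePi_map fun n => hV (n + σ)
  simpa only [comp_apply, (h.2 _).map_eq] using this

theorem IsIIDSeq.measure_preimage_shift (hV : ∀ t, Measurable (V t)) (h : IsIIDSeq μ V)
    (σ : ℕ) {S : Set (ℕ → β)} (hS : MeasurableSet S) :
    μ ((fun ω n => V (n + σ) ω) ⁻¹' S) = μ ((fun ω n => V n ω) ⁻¹' S) := by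
  rw [← Measure.map_apply (measurable_pi_lambda _ fun n => hV _) hS,
    ← Measure.map_apply (measurable_pi_lambda _ fun n => hV _) hS, h.map_shift hV σ]
  exact congrArg (· S) (h.map_shift hV 0).symm

def pastFiltration (V : ℕ → Ω → β) (hV : ∀ t, Measurable (V t)) : Filtration ℕ mΩ where
  seq s := ⨆ j ≤ s, mβ.comap (V j)
  mono' _ _ hst := biSup_mono fun _ hj => hj.trans hst
  le' _ := iSup₂_le fun j _ => (hV j).comap_le

theorem measurable_pastFiltration (hV : ∀ t, Measurable (V t)) {j s : ℕ} (hj : j ≤ s) :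
    Measurable[pastFiltration V hV s] (V j) :=
  .of_comap_le (le_iSup₂ (f := fun j (_ : j ≤ s) => mβ.comap (V j)) j hj)

theorem measurable_shift_iSup_comap (σ : ℕ) :
    Measurable[⨆ j ≥ σ, mβ.comap (V j)] fun ω n => V (n + σ) ω :=
  @measurable_pi_lambda _ _ _ (⨆ j ≥ σ, mβ.comap (V j)) _ _ fun n => .of_comap_le
    (le_iSup₂ (f := fun j (_ : j ≥ σ) => mβ.comap (V j)) (n + σ) (Nat.le_add_left σ n))

theorem iIndepFun.indep_pastFiltration (hV : ∀ t, Measurable (V t)) (h : iIndepFun V μ)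
    (s : ℕ) : Indep (pastFiltration V hV s) (⨆ j ≥ s + 1, mβ.comap (V j)) μ :=
  indep_iSup_of_disjoint (S := Iic s) (T := Ici (s + 1)) (fun j => (hV j).comap_le) h
    (Iic_disjoint_Ici.2 (by omega))

end Independence

theorem tendsto_measure_biUnion_ge_of_ae_eventually_notMem {Ω : Type*} {mΩ : MeasurableSpace Ω}
    {μ : Measure Ω} [IsFiniteMeasure μ] {A : ℕ → Set Ω} (hA : ∀ n, MeasurableSet (A n))
    (h : ∀ᵐ ω ∂μ, ∀ᶠ n in atTop, ω ∉ A n) :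
    Tendsto (fun R => μ (⋃ n ≥ R, A n)) atTop (𝓝 0) := by
  have hanti : Antitone fun R : ℕ => ⋃ n ≥ R, A n :=
    fun _ _ hR => biUnion_mono (fun _ hn => hR.trans hn) fun _ _ => subset_rfl
  have hnull : μ (⋂ R, ⋃ n ≥ R, A n) = 0 := by
    refine measure_mono_null ?_ (ae_iff.1 h)
    intro ω hω hev
    obtain ⟨R, hR⟩ := eventually_atTop.1 hev
    obtain ⟨n, hn, hωn⟩ := mem_iUnion₂.1 (mem_iInter.1 hω R)
    exact hR n hn hωn
  have := tendsto_measure_iInter_atTop (μ := μ)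
    (fun R => (MeasurableSet.iUnion fun n => .iUnion fun _ => hA n).nullMeasurableSet)
    hanti ⟨0, measure_ne_top μ _⟩
  rwa [hnull] at this

section Products

variable {Ω : Type*} {mΩ : MeasurableSpace Ω} {μ : Measure Ω} {d : ℕ}
  {M : ℕ → Ω → Matrix (Fin d) (Fin d) ℝ} {Z : ℕ → Ω → EuclideanSpace ℝ (Fin d)} {x : ℝ}

theorem measure_inter_iUnion_exceedSet_le (hM : ∀ t, Measurable (M t))
    (hZ : ∀ t, Measurable (Z t)) (hiid : IsIIDSeq μ fun t ω => (M t ω, Z t ω)) (R s : ℕ)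
    {E : Set Ω}
    (hE : MeasurableSet[pastFiltration _ (fun t => (hM t).prodMk (hZ t)) s] E) :
    μ (E ∩ ⋃ t > s + R, exceedSet M Z x t) ≤ μ (⋃ m ≥ R, exceedSet M Z x m) * μ E := by
  have hV : ∀ t, Measurable fun ω => (M t ω, Z t ω) := fun t => (hM t).prodMk (hZ t)
  set S : Set (ℕ → Matrix (Fin d) (Fin d) ℝ × EuclideanSpace ℝ (Fin d)) :=
    ⋃ m ≥ R, exceedSet (fun j w => (w j).1) (fun j w => (w j).2) x m
  have hS : MeasurableSet S := .biUnion (to_countable _) fun m _ =>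
    measurableSet_exceedSet (fun j _ => measurable_fst.comp (measurable_pi_apply j))
      (measurable_snd.comp (measurable_pi_apply m))
  set future : ℕ → Set Ω :=
    fun σ => ⋃ m ≥ R, exceedSet (fun j => M (j + σ)) (fun j => Z (j + σ)) x m
  have hpre : ∀ σ, (fun ω n => (M (n + σ) ω, Z (n + σ) ω)) ⁻¹' S = future σ := fun σ => by
    simp only [S, future, preimage_iUnion₂, preimage_exceedSet_fst_snd]
  have hsub : ⋃ t > s + R, exceedSet M Z x t ⊆ future (s + 1) := by
    intro ω hω
    obtain ⟨t, ht, hωt⟩ := mem_iUnion₂.1 hω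
    obtain ⟨m, rfl⟩ : ∃ m, t = m + (s + 1) := ⟨t - (s + 1), by omega⟩
    exact mem_iUnion₂.2 ⟨m, by omega, exceedSet_subset_shift (s + 1) m hωt⟩
  calc μ (E ∩ ⋃ t > s + R, exceedSet M Z x t)
      ≤ μ (E ∩ future (s + 1)) := measure_mono (inter_subset_inter_right _ hsub)
    _ = μ E * μ (future (s + 1)) := by
      rw [← hpre]
      exact (Indep_iff _ _ _).1 (iIndepFun.indep_pastFiltration hV hiid.1 s) _ _ hE
        (measurable_shift_iSup_comap (s + 1) hS)
    _ = μ E * μ (future 0) := by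
      rw [← hpre, ← hpre, hiid.measure_preimage_shift hV (s + 1) hS]
      rfl
    _ = μ (⋃ m ≥ R, exceedSet M Z x m) * μ E := mul_comm _ _

end Products

/-- If `(M₁⋯M_{t-1}) Z_t → 0` a.s., then for every `x > 0` the series
`∑ₜ P(min_{1 ≤ k ≤ t-1} |(M_k⋯M_{t-1}) Z_t| > x)` is finite.  (In 0-based indexing the
minimum over `k < n` of `|(M_k⋯M_{n-1}) Z_n|` exceeds `x` iff all its entries do; for
`n = 0` the minimum over the empty set is `∞ > x`, i.e. the condition holds vacuously.) -/
theorem statement1 {d : ℕ} {Ω : Type*} [MeasurableSpace Ω] (μ : Measure Ω)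
    [IsProbabilityMeasure μ]
    (M : ℕ → Ω → Matrix (Fin d) (Fin d) ℝ) (Z : ℕ → Ω → EuclideanSpace ℝ (Fin d))
    (hM : ∀ t, Measurable (M t)) (hZ : ∀ t, Measurable (Z t))
    (hiid : IsIIDSeq μ (fun t ω => (M t ω, Z t ω)))
    (hto0 : ∀ᵐ ω ∂μ, Tendsto (fun t => app (prodTo M t ω) (Z t ω)) atTop (nhds 0)) :
    ∀ x : ℝ, 0 < x →
      ∑' n : ℕ, μ {ω | ∀ k < n, x < ‖app (prodSeg M k n ω) (Z n ω)‖} ≠ ⊤ := by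
  intro x hx
  have hV : ∀ t, Measurable fun ω => (M t ω, Z t ω) := fun t => (hM t).prodMk (hZ t)
  have hfinally : ∀ᵐ ω ∂μ, ∀ᶠ n in atTop, ω ∉ exceedSet M Z x n := by
    filter_upwards [hto0] with ω hω
    filter_upwards [hω.norm.eventually (gt_mem_nhds (by simpa using hx)),
      eventually_gt_atTop 0] with n hsmall hn hmem
    exact (exceedSet_subset_prodTo hn hmem).not_gt hsmall
  obtain ⟨R, hR⟩ := (tendsto_measure_biUnion_ge_of_ae_eventually_notMem
    (fun n => measurableSet_exceedSet (fun j _ => hM j) (hZ n)) hfinally).eventually_lt_const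
      one_pos |>.exists
  have hbound := tsum_measure_le_of_measure_inter_le (A := exceedSet M Z x) (pastFiltration _ hV)
    (fun t => measurableSet_exceedSet (fun j hj => (measurable_pastFiltration hV hj.le).fst)
      (measurable_pastFiltration hV le_rfl).snd)
    (fun s E hE => measure_inter_iUnion_exceedSet_le hM hZ hiid R s hE)
  refine ne_top_of_le_ne_top ?_ hbound
  exact ENNReal.mul_ne_top (ENNReal.mul_ne_top (by simp)
    (ENNReal.inv_ne_top.2 (tsub_pos_of_lt hR).ne')) (measure_ne_top μ univ)
end
end

section
/- (Kochen–Stone lemma) Let {A_t; t ≥ 1} be events such that ∑_{t=1}^∞ P(A_t) = ∞ and limsup_{n→∞} (∑_{t=1}^n P(A_t))^2 / (∑_{r=1}^n ∑_{t=1}^n P(A_r ∩ A_t)) = c > 0. Then P(A_t infinitely often) ≥ c. -/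
open MeasureTheory ProbabilityTheory Filter

noncomputable section

/-!
Let `F = ∑_{m ≤ t < n} 1_{A t}`. It vanishes off `⋃_{t ≥ m} A t`, so Cauchy–Schwarz gives
`(∫ F)² ≤ ∫ F² · P(⋃_{t ≥ m} A t)`, i.e. `(S n - S m)² ≤ D n · P(⋃_{t ≥ m} A t)` with
`S n = ∑_{t < n} P(A t)` and `D n = ∑_{r, t < n} P(A r ∩ A t)`. As `S n → ∞`, the term `S m` is
negligible, so `c = limsup S n² / D n ≤ P(⋃_{t ≥ m} A t)` for every `m`, and these sets decrease
to `limsup A`.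
-/

open scoped ENNReal Topology

section

variable {α : Type*} [MeasurableSpace α] {μ : Measure α}

theorem ENNReal.sq_lintegral_mul_le {f g : α → ℝ≥0∞} (hf : AEMeasurable f μ)
    (hg : AEMeasurable g μ) :
    (∫⁻ a, f a * g a ∂μ) ^ 2 ≤ (∫⁻ a, f a ^ 2 ∂μ) * ∫⁻ a, g a ^ 2 ∂μ := by
  have h := ENNReal.lintegral_mul_le_Lp_mul_Lq μ .two_two hf hg
  simp only [ENNReal.rpow_two, Pi.mul_apply] at h
  calc (∫⁻ a, f a * g a ∂μ) ^ 2
      ≤ ((∫⁻ a, f a ^ 2 ∂μ) ^ (1 / 2 : ℝ) * (∫⁻ a, g a ^ 2 ∂μ) ^ (1 / 2 : ℝ)) ^ 2 := by gcongr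
    _ = (∫⁻ a, f a ^ 2 ∂μ) * ∫⁻ a, g a ^ 2 ∂μ := by
      rw [mul_pow, ← ENNReal.rpow_two, ← ENNReal.rpow_two, ← ENNReal.rpow_mul, ← ENNReal.rpow_mul]
      norm_num

theorem sq_lintegral_le_lintegral_sq_mul_measure {f : α → ℝ≥0∞} (hf : AEMeasurable f μ)
    {s : Set α} (hs : MeasurableSet s) (hfs : ∀ x ∉ s, f x = 0) :
    (∫⁻ x, f x ∂μ) ^ 2 ≤ (∫⁻ x, f x ^ 2 ∂μ) * μ s := by
  have hfg : ∀ x, f x * s.indicator 1 x = f x := fun x => by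
    by_cases hx : x ∈ s <;> simp [hx, hfs]
  have hg : ∀ x, s.indicator (1 : α → ℝ≥0∞) x ^ 2 = s.indicator 1 x := fun x => by
    by_cases hx : x ∈ s <;> simp [hx]
  simpa only [hfg, hg, lintegral_indicator_one hs] using
    ENNReal.sq_lintegral_mul_le (g := s.indicator 1) hf (aemeasurable_one.indicator hs)

theorem sq_sum_measure_le_sum_measure_inter_mul_measure_biUnion {ι : Type*} {A : ι → Set α}
    (hA : ∀ i, MeasurableSet (A i)) (s : Finset ι) :
    (∑ i ∈ s, μ (A i)) ^ 2 ≤ (∑ i ∈ s, ∑ j ∈ s, μ (A i ∩ A j)) * μ (⋃ i ∈ s, A i) := by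
  set F : α → ℝ≥0∞ := fun x => ∑ i ∈ s, (A i).indicator 1 x
  have hF_meas : Measurable F :=
    Finset.measurable_sum _ fun i _ => measurable_one.indicator (hA i)
  have hF_int : ∫⁻ x, F x ∂μ = ∑ i ∈ s, μ (A i) := by
    rw [lintegral_finsetSum _ fun i _ => measurable_one.indicator (hA i)]
    simp only [lintegral_indicator_one (hA _)]
  have hF_sq : ∀ x, F x ^ 2 = ∑ i ∈ s, ∑ j ∈ s, (A i ∩ A j).indicator 1 x := fun x => by
    simp only [F, sq, Finset.sum_mul_sum, Set.inter_indicator_one, Pi.mul_apply]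
  have hF_sq_int : ∫⁻ x, F x ^ 2 ∂μ = ∑ i ∈ s, ∑ j ∈ s, μ (A i ∩ A j) := by
    simp only [hF_sq]
    rw [lintegral_finsetSum _ fun i _ => Finset.measurable_sum _ fun j _ =>
      measurable_one.indicator ((hA i).inter (hA j))]
    refine Finset.sum_congr rfl fun i _ => ?_
    rw [lintegral_finsetSum _ fun j _ => measurable_one.indicator ((hA i).inter (hA j))]
    simp only [lintegral_indicator_one ((hA _).inter (hA _))]
  have hF_zero : ∀ x ∉ ⋃ i ∈ s, A i, F x = 0 := fun x hx => by
    simp only [Set.mem_iUnion, not_exists] at hx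
    exact Finset.sum_eq_zero fun i hi => Set.indicator_of_notMem (hx i hi) _
  rw [← hF_int, ← hF_sq_int]
  exact sq_lintegral_le_lintegral_sq_mul_measure hF_meas.aemeasurable
    (Finset.measurableSet_biUnion s fun i _ => hA i) hF_zero

theorem sq_sub_sum_measure_le_mul_measure_iUnion_ge [IsFiniteMeasure μ] {A : ℕ → Set α}
    (hA : ∀ n, MeasurableSet (A n)) {m n : ℕ} (hmn : m ≤ n) :
    (∑ t ∈ Finset.range n, (μ (A t)).toReal - ∑ t ∈ Finset.range m, (μ (A t)).toReal) ^ 2 ≤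
      (∑ r ∈ Finset.range n, ∑ t ∈ Finset.range n, (μ (A r ∩ A t)).toReal) *
        (μ (⋃ t ≥ m, A t)).toReal := by
  have hsub : Finset.Ico m n ⊆ Finset.range n := fun t ht =>
    Finset.mem_range.2 (Finset.mem_Ico.1 ht).2
  have hle : (∑ t ∈ Finset.Ico m n, μ (A t)) ^ 2 ≤
      (∑ r ∈ Finset.range n, ∑ t ∈ Finset.range n, μ (A r ∩ A t)) * μ (⋃ t ≥ m, A t) := by
    refine (sq_sum_measure_le_sum_measure_inter_mul_measure_biUnion hA _).trans ?_
    refine mul_le_mul' ?_ (measure_mono ?_)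
    · exact (Finset.sum_le_sum fun r _ => Finset.sum_le_sum_of_subset hsub).trans
        (Finset.sum_le_sum_of_subset hsub)
    · exact Set.biUnion_subset_biUnion_left fun t ht => (Finset.mem_Ico.1 ht).1
  rw [← Finset.sum_Ico_eq_sub _ hmn]
  have := ENNReal.toReal_mono
    (ENNReal.mul_ne_top (by simp [measure_ne_top]) (measure_ne_top _ _)) hle
  rwa [ENNReal.toReal_pow, ENNReal.toReal_mul, ENNReal.toReal_sum fun _ _ => measure_ne_top μ _,
    ENNReal.toReal_sum fun _ _ => ENNReal.sum_ne_top.2 fun _ _ => measure_ne_top μ _,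
    Finset.sum_congr rfl fun _ _ => ENNReal.toReal_sum fun _ _ => measure_ne_top μ _] at this

theorem le_measure_limsup_of_forall_le [IsFiniteMeasure μ] {A : ℕ → Set α}
    (hA : ∀ n, MeasurableSet (A n)) {c : ℝ≥0∞} (h : ∀ m, c ≤ μ (⋃ n ≥ m, A n)) :
    c ≤ μ (limsup A atTop) := by
  have hanti : Antitone fun m => ⋃ n ≥ m, A n := fun m m' hmm' =>
    Set.biUnion_subset_biUnion_left fun n hn => hmm'.trans hn
  rw [limsup_eq_iInf_iSup_of_nat]
  simp only [Set.iSup_eq_iUnion, Set.iInf_eq_iInter]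
  rw [hanti.measure_iInter (fun m => (MeasurableSet.biUnion (Set.to_countable _)
    fun n _ => hA n).nullMeasurableSet) ⟨0, measure_ne_top _ _⟩]
  exact le_iInf h

end

theorem tendsto_sum_toReal_atTop_of_tsum_eq_top {f : ℕ → ℝ≥0∞} (hf : ∀ n, f n ≠ ∞)
    (hsum : ∑' n, f n = ∞) :
    Tendsto (fun n => ∑ i ∈ Finset.range n, (f i).toReal) atTop atTop := by
  refine (not_summable_iff_tendsto_nat_atTop_of_nonneg fun _ => ENNReal.toReal_nonneg).1
    fun h => h.tsum_ofReal_ne_top ?_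
  simpa [ENNReal.ofReal_toReal (hf _)] using hsum

theorem limsup_sq_div_le_of_sq_sub_le {S D : ℕ → ℝ} {u : ℝ} (m : ℕ)
    (hS : Tendsto S atTop atTop) (hD : ∀ n, 0 ≤ D n)
    (h : ∀ n, m ≤ n → (S n - S m) ^ 2 ≤ D n * u) :
    limsup (fun n => S n ^ 2 / D n) atTop ≤ u := by
  have hcobdd : IsCoboundedUnder (· ≤ ·) atTop (fun n => S n ^ 2 / D n) :=
    (isBoundedUnder_of ⟨0, fun n => div_nonneg (sq_nonneg _) (hD n)⟩).isCoboundedUnder_flip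
  have hlim : Tendsto (fun n => u / (1 - S m / S n) ^ 2) atTop (𝓝 u) := by
    have h0 : Tendsto (fun n => (1 - S m / S n) ^ 2) atTop (𝓝 ((1 - 0) ^ 2)) :=
      (tendsto_const_nhds.sub (tendsto_const_nhds.div_atTop hS)).pow 2
    simpa [Pi.div_def] using (tendsto_const_nhds (x := u)).div h0 (by norm_num)
  have hle : ∀ᶠ n in atTop, S n ^ 2 / D n ≤ u / (1 - S m / S n) ^ 2 := by
    filter_upwards [eventually_ge_atTop m, hS.eventually_gt_atTop (max 0 (S m))] with n hmn hSn
    have hSn0 : 0 < S n := (le_max_left _ _).trans_lt hSn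
    have hgap : 0 < (S n - S m) ^ 2 := pow_pos (sub_pos.2 ((le_max_right _ _).trans_lt hSn)) 2
    have hDn : 0 < D n := (hD n).lt_of_ne fun h0 => by
      have := h n hmn
      rw [← h0, zero_mul] at this
      linarith
    have hratio : 1 - S m / S n = (S n - S m) / S n := by field_simp
    rw [hratio, div_pow, div_div_eq_mul_div, div_le_div_iff₀ hDn hgap]
    nlinarith [h n hmn, sq_nonneg (S n)]
  exact (limsup_le_limsup hle hcobdd hlim.isBoundedUnder_le).trans_eq hlim.limsup_eq

theorem statement2_general {Ω : Type*} [MeasurableSpace Ω] (μ : Measure Ω) [IsProbabilityMeasure μ]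
    (A : ℕ → Set Ω) (hA : ∀ t, MeasurableSet (A t))
    (hdiv : ∑' t : ℕ, μ (A t) = ⊤) (c : ℝ)
    (hlimsup : Filter.limsup (fun n =>
        (∑ t ∈ Finset.range n, (μ (A t)).toReal) ^ 2 /
          (∑ r ∈ Finset.range n, ∑ t ∈ Finset.range n, (μ (A r ∩ A t)).toReal))
      atTop = c) :
    c ≤ (μ (Filter.limsup A atTop)).toReal := by
  have hS := tendsto_sum_toReal_atTop_of_tsum_eq_top (fun t => measure_ne_top μ (A t)) hdiv
  have htail : ∀ m, c ≤ (μ (⋃ t ≥ m, A t)).toReal := fun m =>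
    hlimsup ▸ limsup_sq_div_le_of_sq_sub_le m hS (fun n => by positivity)
      fun n hmn => sq_sub_sum_measure_le_mul_measure_iUnion_ge hA hmn
  rw [← ENNReal.ofReal_le_iff_le_toReal (measure_ne_top _ _)]
  exact le_measure_limsup_of_forall_le hA fun m =>
    (ENNReal.ofReal_le_iff_le_toReal (measure_ne_top _ _)).2 (htail m)

/-- The Kochen–Stone lemma. -/
theorem statement2 {Ω : Type*} [MeasurableSpace Ω] (μ : Measure Ω) [IsProbabilityMeasure μ]
    (A : ℕ → Set Ω) (hA : ∀ t, MeasurableSet (A t))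
    (hdiv : ∑' t : ℕ, μ (A t) = ⊤) (c : ℝ) (hc : 0 < c)
    (hlimsup : Filter.limsup (fun n =>
        (∑ t ∈ Finset.range n, (μ (A t)).toReal) ^ 2 /
          (∑ r ∈ Finset.range n, ∑ t ∈ Finset.range n, (μ (A r ∩ A t)).toReal))
      atTop = c) :
    c ≤ (μ (Filter.limsup A atTop)).toReal :=
  statement2_general μ A hA hdiv c hlimsup
end
end

section
/- Let {(M_t, Z_t); t ≥ 1} be i.i.d. in R^{d×d} × R^d, Z_0 independent of the sequence, and define X_0 = Z_0, X_t = M_t X_{t-1} + Z_t. If ‖M_1 ⋯ M_t‖ → 0 a.s. as t → ∞ and ∑_{i=1}^t (∏_{j=1}^{i-1} M_j) Z_i converges almost surely as t → ∞, then X_t converges in distribution as t → ∞. -/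
open MeasureTheory ProbabilityTheory Filter

noncomputable section

/-!
Unrolling the recursion, `X t` is a fixed continuous function of `Z0` and the block
`(M 0, Z 0), …, (M (t-1), Z (t-1))`. Feeding the same function the block in reverse order gives
`M 0 ⋯ M (t-1) Z0 + ∑_{i<t} M 0 ⋯ M (i-1) Z i`; since the block is i.i.d. and independent of `Z0`,
reversing it does not change the joint law, so this backward process has the same law as `X t`.
The backward process converges almost surely by the two hypotheses, hence in distribution, and
convergence in distribution only sees the laws.
-/

open scoped Topology Matrix

section Distribution

variable {Ω α β : Type*} [MeasurableSpace Ω] [MeasurableSpace α] [MeasurableSpace β]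
  {μ : Measure Ω} [IsProbabilityMeasure μ]

theorem ProbabilityTheory.IdentDistrib.prodMk_of_indepFun {Ω' : Type*} [MeasurableSpace Ω']
    {ν : Measure Ω'} [IsProbabilityMeasure ν] {Y : Ω → α} {V : Ω → β} {Y' : Ω' → α} {V' : Ω' → β}
    (hY : IdentDistrib Y Y' μ ν) (hV : IdentDistrib V V' μ ν)
    (h : IndepFun Y V μ) (h' : IndepFun Y' V' ν) :
    IdentDistrib (fun ω => (Y ω, V ω)) (fun ω => (Y' ω, V' ω)) μ ν where
  aemeasurable_fst := hY.aemeasurable_fst.prodMk hV.aemeasurable_fst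
  aemeasurable_snd := hY.aemeasurable_snd.prodMk hV.aemeasurable_snd
  map_eq := by
    rw [(indepFun_iff_map_prod_eq_prod_map_map hY.aemeasurable_fst hV.aemeasurable_fst).1 h,
      (indepFun_iff_map_prod_eq_prod_map_map hY.aemeasurable_snd hV.aemeasurable_snd).1 h',
      hY.map_eq, hV.map_eq]

theorem IsIIDSeq.map_comp_eq_pi {W : ℕ → Ω → β} (hW : IsIIDSeq μ W) {ι : Type*} [Fintype ι]
    {e : ι → ℕ} (he : Function.Injective e) :
    μ.map (fun ω i => W (e i) ω) = Measure.pi fun _ => μ.map (W 0) := by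
  rw [(iIndepFun_iff_map_fun_eq_pi_map fun i => (hW.2 (e i)).aemeasurable_fst).1
    (hW.1.precomp he)]
  simp_rw [(hW.2 _).map_eq]

theorem IsIIDSeq.identDistrib_prodMk_comp {W : ℕ → Ω → β} (hW : IsIIDSeq μ W) {Y : Ω → α}
    (hY : AEMeasurable Y μ) (hYW : IndepFun Y (fun ω n => W n ω) μ) {ι : Type*} [Fintype ι]
    {e e' : ι → ℕ} (he : Function.Injective e) (he' : Function.Injective e') :
    IdentDistrib (fun ω => (Y ω, fun i => W (e i) ω)) (fun ω => (Y ω, fun i => W (e' i) ω))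
      μ μ := by
  have hproj (e : ι → ℕ) : Measurable fun w : ℕ → β => fun i => w (e i) :=
    measurable_pi_lambda _ fun i => measurable_pi_apply (e i)
  refine (IdentDistrib.refl hY).prodMk_of_indepFun ⟨?_, ?_, ?_⟩
    (hYW.comp measurable_id (hproj e)) (hYW.comp measurable_id (hproj e'))
  · exact aemeasurable_pi_lambda _ fun i => (hW.2 (e i)).aemeasurable_fst
  · exact aemeasurable_pi_lambda _ fun i => (hW.2 (e' i)).aemeasurable_fst
  · rw [hW.map_comp_eq_pi he, hW.map_comp_eq_pi he']

end Distribution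

section Weak

variable {ι Ω E : Type*} [MeasurableSpace Ω] {μ : Measure Ω} [IsProbabilityMeasure μ]
  [TopologicalSpace E] [MeasurableSpace E] [OpensMeasurableSpace E] {l : Filter ι}
  {X Y : ι → Ω → E} {Z : Ω → E}

theorem MeasureTheory.TendstoInDistribution.of_identDistrib
    (h : TendstoInDistribution Y l Z (fun _ => μ) μ)
    (hXY : ∀ i, IdentDistrib (X i) (Y i) μ μ) :
    TendstoInDistribution X l Z (fun _ => μ) μ where
  forall_aemeasurable i := (hXY i).aemeasurable_fst
  aemeasurable_limit := h.aemeasurable_limit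
  tendsto := h.tendsto.congr fun i => Subtype.ext (hXY i).map_eq.symm

theorem MeasureTheory.TendstoInDistribution.tendsto_integral
    [TopologicalSpace.PseudoMetrizableSpace E] [BorelSpace E]
    (h : TendstoInDistribution X l Z (fun _ => μ) μ) (f : BoundedContinuousFunction E ℝ) :
    Tendsto (fun i => ∫ ω, f (X i ω) ∂μ) l (𝓝 (∫ v, f v ∂μ.map Z)) := by
  have := ProbabilityMeasure.tendsto_iff_forall_integral_tendsto.1 h.tendsto f
  simp only [ProbabilityMeasure.coe_mk] at this
  refine this.congr fun i => ?_
  rw [integral_map (h.forall_aemeasurable i) f.continuous.aestronglyMeasurable]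

end Weak

instance inst_s7 {m n α : Type*} [Countable m] [Countable n] [TopologicalSpace α]
    [SecondCountableTopology α] : SecondCountableTopology (Matrix m n α) :=
  inferInstanceAs (SecondCountableTopology (m → n → α))

instance inst_s7_2 {m n α : Type*} [Countable m] [Countable n] [TopologicalSpace α] [MeasurableSpace α]
    [SecondCountableTopology α] [BorelSpace α] : BorelSpace (Matrix m n α) :=
  inferInstanceAs (BorelSpace (m → n → α))

section RCA

variable {d : ℕ}

theorem app_eq_toLp_mulVec (A : Matrix (Fin d) (Fin d) ℝ) (v : EuclideanSpace ℝ (Fin d)) :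
    app A v = WithLp.toLp 2 (A *ᵥ v.ofLp) := rfl

theorem app_add (A : Matrix (Fin d) (Fin d) ℝ) (u v : EuclideanSpace ℝ (Fin d)) :
    app A (u + v) = app A u + app A v :=
  map_add _ u v

theorem app_mul (A B : Matrix (Fin d) (Fin d) ℝ) (v : EuclideanSpace ℝ (Fin d)) :
    app (A * B) v = app A (app B v) := by
  simp [app_eq_toLp_mulVec, Matrix.mulVec_mulVec]

theorem norm_app_le (A : Matrix (Fin d) (Fin d) ℝ) (v : EuclideanSpace ℝ (Fin d)) :
    ‖app A v‖ ≤ sNorm A * ‖v‖ :=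
  (Matrix.toEuclideanCLM (𝕜 := ℝ) A).le_opNorm v

theorem tendsto_app_zero_of_tendsto_sNorm {ι : Type*} {l : Filter ι}
    {A : ι → Matrix (Fin d) (Fin d) ℝ} (hA : Tendsto (fun i => sNorm (A i)) l (𝓝 0))
    (v : EuclideanSpace ℝ (Fin d)) : Tendsto (fun i => app (A i) v) l (𝓝 0) :=
  squeeze_zero_norm (fun i => norm_app_le (A i) v) (by simpa using hA.mul_const ‖v‖)

theorem prodTo_succ {Ω : Type*} (M : ℕ → Ω → Matrix (Fin d) (Fin d) ℝ) (t : ℕ) (ω : Ω) :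
    prodTo M (t + 1) ω = prodTo M t ω * M t ω := by
  simp [prodTo, List.range_succ]

def rcaStep (x : EuclideanSpace ℝ (Fin d))
    (w : Matrix (Fin d) (Fin d) ℝ × EuclideanSpace ℝ (Fin d)) : EuclideanSpace ℝ (Fin d) :=
  app w.1 x + w.2

theorem continuous_rcaStep :
    Continuous fun p : EuclideanSpace ℝ (Fin d) ×
      (Matrix (Fin d) (Fin d) ℝ × EuclideanSpace ℝ (Fin d)) => rcaStep p.1 p.2 := by
  simp only [rcaStep, app_eq_toLp_mulVec]
  fun_prop

def rcaIterate {t : ℕ} (x : EuclideanSpace ℝ (Fin d))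
    (w : Fin t → Matrix (Fin d) (Fin d) ℝ × EuclideanSpace ℝ (Fin d)) :
    EuclideanSpace ℝ (Fin d) :=
  (List.ofFn w).foldl rcaStep x

theorem rcaIterate_succ {t : ℕ} (x : EuclideanSpace ℝ (Fin d))
    (w : Fin (t + 1) → Matrix (Fin d) (Fin d) ℝ × EuclideanSpace ℝ (Fin d)) :
    rcaIterate x w = rcaIterate (rcaStep x (w 0)) (Fin.tail w) := by
  simp only [rcaIterate, List.ofFn_succ, List.foldl_cons]
  rfl

theorem rcaIterate_succ' {t : ℕ} (x : EuclideanSpace ℝ (Fin d))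
    (w : Fin (t + 1) → Matrix (Fin d) (Fin d) ℝ × EuclideanSpace ℝ (Fin d)) :
    rcaIterate x w = rcaStep (rcaIterate x (Fin.init w)) (w (Fin.last t)) := by
  rw [rcaIterate, List.ofFn_succ', List.concat_eq_append, List.foldl_append]
  rfl

theorem continuous_rcaIterate (t : ℕ) :
    Continuous fun p : EuclideanSpace ℝ (Fin d) ×
      (Fin t → Matrix (Fin d) (Fin d) ℝ × EuclideanSpace ℝ (Fin d)) => rcaIterate p.1 p.2 := by
  induction t with
  | zero => exact continuous_fst
  | succ t ih =>
    simp only [rcaIterate_succ]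
    exact ih.comp ((continuous_rcaStep.comp (continuous_fst.prodMk
      ((continuous_apply 0).comp continuous_snd))).prodMk
      (continuous_pi fun i => (continuous_apply i.succ).comp continuous_snd))

theorem eq_rcaIterate_of_rec (x : ℕ → EuclideanSpace ℝ (Fin d))
    (w : ℕ → Matrix (Fin d) (Fin d) ℝ × EuclideanSpace ℝ (Fin d))
    (hx : ∀ t, x (t + 1) = rcaStep (x t) (w t)) (t : ℕ) :
    x t = rcaIterate (x 0) (fun i : Fin t => w i) := by
  induction t with
  | zero => rfl
  | succ t ih => rw [hx, ih, rcaIterate_succ' _ (fun i : Fin (t + 1) => w i)]; rfl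

theorem rcaIterate_rev {Ω : Type*} (M : ℕ → Ω → Matrix (Fin d) (Fin d) ℝ)
    (Z : ℕ → Ω → EuclideanSpace ℝ (Fin d)) (ω : Ω) (t : ℕ) (x : EuclideanSpace ℝ (Fin d)) :
    rcaIterate x (fun i : Fin t => (M (Fin.rev i) ω, Z (Fin.rev i) ω)) =
      app (prodTo M t ω) x + ∑ i ∈ Finset.range t, app (prodTo M i ω) (Z i ω) := by
  induction t generalizing x with
  | zero => simp [rcaIterate, prodTo, app_eq_toLp_mulVec]
  | succ t ih =>
    have htail : Fin.tail (fun i : Fin (t + 1) => (M (Fin.rev i) ω, Z (Fin.rev i) ω)) =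
        fun i : Fin t => (M (Fin.rev i) ω, Z (Fin.rev i) ω) := by
      funext i
      simp [Fin.tail, Fin.rev_succ]
    rw [rcaIterate_succ, htail, ih]
    simp only [Fin.rev_zero, Fin.val_last]
    rw [rcaStep, app_add, ← app_mul, ← prodTo_succ, Finset.sum_range_succ]
    abel

variable {Ω : Type*} [MeasurableSpace Ω] {μ : Measure Ω} [IsProbabilityMeasure μ]

theorem IsIIDSeq.identDistrib_rcaIterate_rev
    {W : ℕ → Ω → Matrix (Fin d) (Fin d) ℝ × EuclideanSpace ℝ (Fin d)} (hW : IsIIDSeq μ W)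
    {Y : Ω → EuclideanSpace ℝ (Fin d)} (hY : AEMeasurable Y μ)
    (hYW : IndepFun Y (fun ω n => W n ω) μ) (t : ℕ) :
    IdentDistrib (fun ω => rcaIterate (Y ω) fun i : Fin t => W i ω)
      (fun ω => rcaIterate (Y ω) fun i : Fin t => W (Fin.rev i) ω) μ μ :=
  (hW.identDistrib_prodMk_comp hY hYW Fin.val_injective
    (Fin.val_injective.comp Fin.rev_injective)).comp (continuous_rcaIterate t).measurable

end RCA

theorem statement7_general {d : ℕ} {Ω : Type*} [MeasurableSpace Ω] (μ : Measure Ω)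
    [IsProbabilityMeasure μ]
    (M : ℕ → Ω → Matrix (Fin d) (Fin d) ℝ) (Z : ℕ → Ω → EuclideanSpace ℝ (Fin d))
    (hiid : IsIIDSeq μ (fun t ω => (M t ω, Z t ω)))
    (Z0 : Ω → EuclideanSpace ℝ (Fin d)) (hZ0 : Measurable Z0)
    (hindep : IndepFun Z0 (fun ω => fun t => (M t ω, Z t ω)) μ)
    (X : ℕ → Ω → EuclideanSpace ℝ (Fin d))
    (hX0 : ∀ ω, X 0 ω = Z0 ω)
    (hXrec : ∀ t ω, X (t + 1) ω = app (M t ω) (X t ω) + Z t ω)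
    (hC0 : ∀ᵐ ω ∂μ, Tendsto (fun t => sNorm (prodTo M t ω)) atTop (nhds 0))
    (hconv : ∀ᵐ ω ∂μ, ∃ L, Tendsto
      (fun t => ∑ i ∈ Finset.range t, app (prodTo M i ω) (Z i ω)) atTop (nhds L)) :
    ∃ ν : Measure (EuclideanSpace ℝ (Fin d)), IsProbabilityMeasure ν ∧
      ∀ f : BoundedContinuousFunction (EuclideanSpace ℝ (Fin d)) ℝ,
        Tendsto (fun t => ∫ ω, f (X t ω) ∂μ) atTop (nhds (∫ v, f v ∂ν)) := by
  set Y : ℕ → Ω → EuclideanSpace ℝ (Fin d) := fun t ω =>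
    app (prodTo M t ω) (Z0 ω) + ∑ i ∈ Finset.range t, app (prodTo M i ω) (Z i ω)
  have hXY (t : ℕ) : IdentDistrib (X t) (Y t) μ μ := by
    have h := hiid.identDistrib_rcaIterate_rev hZ0.aemeasurable hindep t
    have hXt : (fun ω => rcaIterate (Z0 ω) fun i : Fin t => (M i ω, Z i ω)) = X t := by
      funext ω
      rw [eq_rcaIterate_of_rec (X · ω) (fun n => (M n ω, Z n ω)) (fun t => hXrec t ω) t, hX0]
    have hYt : (fun ω => rcaIterate (Z0 ω) fun i : Fin t => (M (Fin.rev i) ω, Z (Fin.rev i) ω))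
        = Y t :=
      funext fun ω => rcaIterate_rev M Z ω t (Z0 ω)
    rwa [hXt, hYt] at h
  have hY : ∀ᵐ ω ∂μ, ∃ L, Tendsto (fun t => Y t ω) atTop (𝓝 L) := by
    filter_upwards [hC0, hconv] with ω hω ⟨L, hL⟩
    exact ⟨_, (tendsto_app_zero_of_tendsto_sNorm hω (Z0 ω)).add hL⟩
  obtain ⟨L, hL, hYL⟩ :=
    measurable_limit_of_tendsto_metrizable_ae (fun t => (hXY t).aemeasurable_snd) hY
  refine ⟨μ.map L, Measure.isProbabilityMeasure_map hL.aemeasurable, fun f => ?_⟩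
  exact ((tendstoInDistribution_of_ae_tendsto (fun t => (hXY t).aemeasurable_snd)
    hL.aemeasurable hYL).of_identDistrib hXY).tendsto_integral f

/-- Under C0, a.s. convergence of the perpetuity series implies convergence in
distribution of the RCA(1) process. -/
theorem statement7 {d : ℕ} {Ω : Type*} [MeasurableSpace Ω] (μ : Measure Ω)
    [IsProbabilityMeasure μ]
    (M : ℕ → Ω → Matrix (Fin d) (Fin d) ℝ) (Z : ℕ → Ω → EuclideanSpace ℝ (Fin d))
    (hM : ∀ t, Measurable (M t)) (hZ : ∀ t, Measurable (Z t))
    (hiid : IsIIDSeq μ (fun t ω => (M t ω, Z t ω)))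
    (Z0 : Ω → EuclideanSpace ℝ (Fin d)) (hZ0 : Measurable Z0)
    (hindep : IndepFun Z0 (fun ω => fun t => (M t ω, Z t ω)) μ)
    (X : ℕ → Ω → EuclideanSpace ℝ (Fin d))
    (hX0 : ∀ ω, X 0 ω = Z0 ω)
    (hXrec : ∀ t ω, X (t + 1) ω = app (M t ω) (X t ω) + Z t ω)
    (hC0 : ∀ᵐ ω ∂μ, Tendsto (fun t => sNorm (prodTo M t ω)) atTop (nhds 0))
    (hconv : ∀ᵐ ω ∂μ, ∃ L, Tendsto
      (fun t => ∑ i ∈ Finset.range t, app (prodTo M i ω) (Z i ω)) atTop (nhds L)) :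
    ∃ ν : Measure (EuclideanSpace ℝ (Fin d)), IsProbabilityMeasure ν ∧
      ∀ f : BoundedContinuousFunction (EuclideanSpace ℝ (Fin d)) ℝ,
        Tendsto (fun t => ∫ ω, f (X t ω) ∂μ) atTop (nhds (∫ v, f v ∂ν)) :=
  statement7_general μ M Z hiid Z0 hZ0 hindep X hX0 hXrec hC0 hconv
end
end

section
/- Let d = 1, |β| > 1, c > 0, and define the deterministic AR(1) process X_0 = c, X_t = β X_{t-1} + (1-β)c. Then X_t = c for all t, so X_t converges (in distribution); yet |β^{t-1}(1-β)c| → ∞ as t → ∞, so neither sup_t |β^{t-1}(1-β)c| < ∞ nor ∑_t P(min_{1≤k≤t-1} |β^{t-k}(1-β)c| > x) < ∞ for all x > 0 holds. -/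
open MeasureTheory ProbabilityTheory Filter
open scoped ENNReal NNReal

noncomputable section

/- Starting at the fixed point `c` of the affine map `x ↦ β x + (1 - β) c`, the AR(1) recursion
never moves. The perpetuity terms `β^t (1 - β) c` grow like `|β|^t` and already exceed
`|(1 - β) c|` for every `t ≥ 1`, so for `x = |(1 - β) c|` the indicator is the constant `1`. -/

theorem eq_of_affine_rec_of_start_fixedPoint {R : Type*} [Ring R] {β c : R} {X : ℕ → R}
    (hX0 : X 0 = c) (hXrec : ∀ t, X (t + 1) = β * X t + (1 - β) * c) (t : ℕ) : X t = c := by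
  induction t with
  | zero => exact hX0
  | succ n ih => rw [hXrec n, ih, ← add_mul, add_sub_cancel, one_mul]

section Growth

variable {K : Type*} [Field K] [LinearOrder K] [IsStrictOrderedRing K] {β a : K}

theorem tendsto_abs_pow_mul_atTop [Archimedean K] (hβ : 1 < |β|) (ha : a ≠ 0) :
    Tendsto (fun t : ℕ => |β ^ t * a|) atTop atTop := by
  simpa only [abs_mul, abs_pow] using
    (tendsto_pow_atTop_atTop_of_one_lt hβ).atTop_mul_const (abs_pos.mpr ha)

theorem abs_lt_abs_pow_mul (hβ : 1 < |β|) (ha : a ≠ 0) {e : ℕ} (he : e ≠ 0) :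
    |a| < |β ^ e * a| := by
  rw [abs_mul, abs_pow]
  exact lt_mul_of_one_lt_left (abs_pos.mpr ha) (one_lt_pow₀ hβ he)

end Growth

/-- The deterministic one-dimensional AR(1) process `X_t = β X_{t-1} + (1-β)c` with
`|β| > 1` and `X₀ = c` is constant (so converges in distribution), yet the perpetuity
terms `β^{t-1}(1-β)c` blow up, so neither (v) nor (vi) holds. -/
theorem statement12 (β c : ℝ) (hβ : 1 < |β|) (hc : 0 < c)
    (X : ℕ → ℝ) (hX0 : X 0 = c) (hXrec : ∀ t, X (t + 1) = β * X t + (1 - β) * c) :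
    (∀ t, X t = c) ∧ Tendsto X atTop (nhds c) ∧
    Tendsto (fun t : ℕ => |β ^ t * ((1 - β) * c)|) atTop atTop ∧
    (¬ ∃ C : ℝ, ∀ t : ℕ, |β ^ t * ((1 - β) * c)| ≤ C) ∧
    ¬ ∀ x : ℝ, 0 < x → Summable
        ({n : ℕ | ∀ e, 1 ≤ e → e ≤ n → x < |β ^ e * ((1 - β) * c)|}.indicator fun _ => (1 : ℝ)) := by
  have hβ1 : 1 - β ≠ 0 := by
    rintro h
    rw [← eq_of_sub_eq_zero h, abs_one] at hβ
    exact lt_irrefl 1 hβ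
  have ha : (1 - β) * c ≠ 0 := mul_ne_zero hβ1 hc.ne'
  have hXc := eq_of_affine_rec_of_start_fixedPoint hX0 hXrec
  have hgrowth := tendsto_abs_pow_mul_atTop hβ ha
  refine ⟨hXc, ?_, hgrowth, ?_, ?_⟩
  · simpa only [funext hXc] using tendsto_const_nhds
  · rintro ⟨C, hC⟩
    exact not_bddAbove_of_tendsto_atTop hgrowth ⟨C, by rintro _ ⟨t, rfl⟩; exact hC t⟩
  · intro hsum
    have huniv : {n : ℕ | ∀ e, 1 ≤ e → e ≤ n → |(1 - β) * c| < |β ^ e * ((1 - β) * c)|} =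
        Set.univ :=
      Set.eq_univ_of_forall fun _ _ he _ => abs_lt_abs_pow_mul hβ ha (Nat.one_le_iff_ne_zero.mp he)
    have := hsum _ (abs_pos.mpr ha)
    rw [huniv, Set.indicator_univ, summable_const_iff] at this
    exact one_ne_zero this
end
end
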